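/- Pivotality conditioned on a subset (case n = 1 of the joint-pivotality lemma): let E be a finite set, h : {-1,1}^E → {0,1}, J ⊆ E, and W ⊆ E with W ∩ J = ∅. Then ∑_{S : S ∩ J ≠ ∅, S ∩ W = ∅} ĥ(S)² ≤ 4 · E[ P[Piv_J(h) | ω_{|E∖W}]² ]. -/

import Mathlib

open Finset
open scoped Classical

noncomputable section

/-- Expectation with respect to the uniform product measure on `{-1,1}^E`. -/
def cubeExp {E : Type*} [Fintype E] [DecidableEq E] (f : (E → Bool) → ℝ) : ℝ :=
  (∑ ω : E → Bool, f ω) / 2 ^ Fintype.card E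

/-- The Walsh character `χ_S(ω) = ∏_{i ∈ S} ω(i)` (with `true ↦ +1`, `false ↦ -1`). -/
def walsh {E : Type*} (S : Finset E) (ω : E → Bool) : ℝ :=
  ∏ i ∈ S, (if ω i then (1 : ℝ) else -1)

/-- The Fourier–Walsh coefficient `ĥ(S) = E[h χ_S]`. -/
def walshCoeff {E : Type*} [Fintype E] [DecidableEq E]
    (h : (E → Bool) → ℝ) (S : Finset E) : ℝ :=
  cubeExp (fun ω => h ω * walsh S ω)

/-- The conditional expectation of `h` given the coordinates outside `W`,
obtained by averaging over the coordinates in `W`. -/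
def condExpOutside {E : Type*} [Fintype E] [DecidableEq E]
    (W : Finset E) (h : (E → Bool) → ℝ) (ω : E → Bool) : ℝ :=
  (∑ τ : E → Bool, h (fun i => if i ∈ W then τ i else ω i)) / 2 ^ Fintype.card E

/-- `Piv_J(h)`: the event that `h` can be changed by modifying coordinates only inside `J`. -/
def pivotal {E : Type*} (J : Finset E) (h : (E → Bool) → ℝ) (ω : E → Bool) : Prop :=
  ∃ ω' : E → Bool, (∀ i, i ∉ J → ω' i = ω i) ∧ h ω' ≠ h ω

/-
Let `g := E[h - E[h | ω_{E∖J}] | ω_{E∖W}]`. Conditioning on the coordinates outside a set `A` keeps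
exactly the Walsh coefficients `ĝ(S)` with `S ∩ A = ∅`, so `ĝ(S) = ĥ(S)` when `S` meets `J` but not
`W`, and `ĝ(S) = 0` otherwise; by Parseval the left-hand side is `E[g²]`. Resampling the
coordinates in `J` does not change `h` off `Piv_J(h)`, and changes a `{0,1}`-valued `h` by at most
`1` on it, so `|h - E[h | ω_{E∖J}]| ≤ 1_{Piv_J(h)}`; averaging over the coordinates in `W` gives
`|g| ≤ P[Piv_J(h) | ω_{E∖W}]`.
-/

section

variable {E : Type*}

def mixOn [DecidableEq E] (W : Finset E) (τ ω : E → Bool) : E → Bool :=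
  fun i => if i ∈ W then τ i else ω i

lemma walsh_congr {S : Finset E} {ω ω' : E → Bool} (h : ∀ i ∈ S, ω i = ω' i) :
    walsh S ω = walsh S ω' :=
  Finset.prod_congr rfl fun i hi => by rw [h i hi]

lemma walsh_inter_mul_walsh_sdiff [DecidableEq E] (S W : Finset E) (ω : E → Bool) :
    walsh (S ∩ W) ω * walsh (S \ W) ω = walsh S ω :=
  Finset.prod_inter_mul_prod_sdiff S W _

lemma sum_walsh_mul_walsh [Fintype E] (ω ω' : E → Bool) :
    ∑ S : Finset E, walsh S ω * walsh S ω' = if ω = ω' then 2 ^ Fintype.card E else 0 := by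
  have hfactor (i : E) :
      1 + (if ω i then (1 : ℝ) else -1) * (if ω' i then 1 else -1)
        = if ω i = ω' i then 2 else 0 := by
    cases ω i <;> cases ω' i <;> norm_num
  simp_rw [walsh, ← Finset.prod_mul_distrib]
  rw [← Finset.powerset_univ, ← Finset.prod_one_add, Finset.prod_congr rfl fun i _ => hfactor i,
    Finset.prod_ite_zero]
  simp [funext_iff]

section Cube

variable [Fintype E] [DecidableEq E]

lemma sum_walsh (U : Finset E) :
    ∑ ρ : E → Bool, walsh U ρ = if U = ∅ then 2 ^ Fintype.card E else 0 := by
  have hfactor (i : E) :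
      ∑ b : Bool, (if i ∈ U then (if b then (1 : ℝ) else -1) else 1) = if i ∉ U then 2 else 0 := by
    by_cases hi : i ∈ U <;> simp [hi]
  simp_rw [walsh, ← Fintype.prod_ite_mem U]
  rw [← Fintype.prod_sum fun i (b : Bool) => if i ∈ U then (if b then (1 : ℝ) else -1) else 1,
    Finset.prod_congr rfl fun i _ => hfactor i, Finset.prod_ite_zero]
  simp [Finset.eq_empty_iff_forall_notMem]

theorem sum_walshCoeff_sq (f : (E → Bool) → ℝ) :
    ∑ S : Finset E, walshCoeff f S ^ 2 = cubeExp (fun ω => f ω ^ 2) := by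
  have key : ∑ S : Finset E, (∑ ω, f ω * walsh S ω) ^ 2
      = (∑ ω, f ω ^ 2) * 2 ^ Fintype.card E := by
    calc ∑ S : Finset E, (∑ ω, f ω * walsh S ω) ^ 2
        = ∑ ω, ∑ ω', f ω * f ω' * ∑ S : Finset E, walsh S ω * walsh S ω' := by
          simp_rw [sq, Finset.sum_mul_sum, Finset.mul_sum]
          rw [Finset.sum_comm]
          refine Finset.sum_congr rfl fun ω _ => ?_
          rw [Finset.sum_comm]
          exact Finset.sum_congr rfl fun ω' _ => Finset.sum_congr rfl fun S _ => by ring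
      _ = ∑ ω, f ω ^ 2 * 2 ^ Fintype.card E := by
          simp_rw [sum_walsh_mul_walsh, mul_ite, mul_zero, Finset.sum_ite_eq, Finset.mem_univ,
            if_true, sq]
      _ = (∑ ω, f ω ^ 2) * 2 ^ Fintype.card E := (Finset.sum_mul _ _ _).symm
  simp only [walshCoeff, cubeExp, div_pow]
  rw [← Finset.sum_div, key]
  field_simp

lemma cubeExp_mono {f g : (E → Bool) → ℝ} (hfg : ∀ ω, f ω ≤ g ω) : cubeExp f ≤ cubeExp g := by
  unfold cubeExp
  gcongr with ω
  exact hfg ω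

lemma cubeExp_nonneg {f : (E → Bool) → ℝ} (hf : ∀ ω, 0 ≤ f ω) : 0 ≤ cubeExp f := by
  unfold cubeExp
  have := Finset.sum_nonneg fun ω (_ : ω ∈ Finset.univ) => hf ω
  positivity

lemma condExpOutside_eq (W : Finset E) (f : (E → Bool) → ℝ) (ω : E → Bool) :
    condExpOutside W f ω = (∑ τ, f (mixOn W τ ω)) / 2 ^ Fintype.card E :=
  rfl

lemma condExpOutside_const (W : Finset E) (c : ℝ) (ω : E → Bool) :
    condExpOutside W (fun _ => c) ω = c := by
  simp [condExpOutside]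

lemma condExpOutside_sub (W : Finset E) (f g : (E → Bool) → ℝ) (ω : E → Bool) :
    condExpOutside W (fun ω' => f ω' - g ω') ω = condExpOutside W f ω - condExpOutside W g ω := by
  simp only [condExpOutside_eq, Finset.sum_sub_distrib, sub_div]

lemma abs_condExpOutside_le {W : Finset E} {f g : (E → Bool) → ℝ} {ω : E → Bool}
    (hfg : ∀ τ, |f (mixOn W τ ω)| ≤ g (mixOn W τ ω)) :
    |condExpOutside W f ω| ≤ condExpOutside W g ω := by
  have hN : (0 : ℝ) < 2 ^ Fintype.card E := by positivity
  rw [condExpOutside_eq, condExpOutside_eq, abs_div, abs_of_pos hN]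
  exact div_le_div_of_nonneg_right
    ((Finset.abs_sum_le_sum_abs _ _).trans (Finset.sum_le_sum fun τ _ => hfg τ)) hN.le

lemma abs_sub_condExpOutside_le_pivotal {h : (E → Bool) → ℝ} (hh : ∀ ω ω', |h ω - h ω'| ≤ 1)
    (J : Finset E) (ω : E → Bool) :
    |h ω - condExpOutside J h ω| ≤ if pivotal J h ω then 1 else 0 := by
  have hterm (τ : E → Bool) : |h ω - h (mixOn J τ ω)| ≤ if pivotal J h ω then 1 else 0 := by
    split_ifs with hpiv
    · exact hh _ _
    · have hfix : h (mixOn J τ ω) = h ω :=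
        not_not.mp fun hne => hpiv ⟨_, fun i hi => if_neg hi, hne⟩
      simp [hfix]
  calc |h ω - condExpOutside J h ω|
      = |condExpOutside J (fun ω' => h ω - h ω') ω| := by
        rw [condExpOutside_sub, condExpOutside_const]
    _ ≤ condExpOutside J (fun _ => if pivotal J h ω then 1 else 0) ω :=
        abs_condExpOutside_le hterm
    _ = _ := condExpOutside_const _ _ _

lemma sum_sum_mixOn_mul_walsh (W S : Finset E) (f : (E → Bool) → ℝ) :
    ∑ ω, (∑ τ, f (mixOn W τ ω)) * walsh S ω
      = (∑ σ, f σ * walsh (S \ W) σ) * ∑ ρ, walsh (S ∩ W) ρ := by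
  have hsdiff (τ ω : E → Bool) : walsh (S \ W) (mixOn W τ ω) = walsh (S \ W) ω :=
    walsh_congr fun i hi => if_neg (Finset.mem_sdiff.mp hi).2
  have hinter (τ ω : E → Bool) : walsh (S ∩ W) (mixOn W ω τ) = walsh (S ∩ W) ω :=
    walsh_congr fun i hi => if_pos (Finset.mem_inter.mp hi).2
  -- `(ω, τ) ↦ (σ, ρ)` exchanges the `W`-coordinates; then `χ_S(ω) = χ_{S∖W}(σ) χ_{S∩W}(ρ)`.
  have hswap : Function.Involutive fun p : (E → Bool) × (E → Bool) =>
      (mixOn W p.2 p.1, mixOn W p.1 p.2) := fun p => by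
    ext i <;> by_cases hi : i ∈ W <;> simp [mixOn, hi]
  simp_rw [Finset.sum_mul_sum, Finset.sum_mul]
  rw [← Fintype.sum_prod_type', ← Fintype.sum_prod_type']
  refine Fintype.sum_bijective _ hswap.bijective _ _ fun p => ?_
  rw [hsdiff, hinter, ← walsh_inter_mul_walsh_sdiff S W p.1]
  ring

lemma walshCoeff_condExpOutside (W : Finset E) (f : (E → Bool) → ℝ) (S : Finset E) :
    walshCoeff (condExpOutside W f) S = if S ∩ W = ∅ then walshCoeff f S else 0 := by
  have hexpand : walshCoeff (condExpOutside W f) S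
      = (∑ ω, (∑ τ, f (mixOn W τ ω)) * walsh S ω) / 2 ^ Fintype.card E / 2 ^ Fintype.card E := by
    simp only [walshCoeff, cubeExp, condExpOutside_eq, div_mul_eq_mul_div, ← Finset.sum_div]
  rw [hexpand, sum_sum_mixOn_mul_walsh, sum_walsh]
  split_ifs with hSW
  · rw [Finset.sdiff_eq_self_of_disjoint (Finset.disjoint_iff_inter_eq_empty.mpr hSW)]
    simp [walshCoeff, cubeExp]
  · simp

lemma walshCoeff_sub (f g : (E → Bool) → ℝ) (S : Finset E) :
    walshCoeff (fun ω => f ω - g ω) S = walshCoeff f S - walshCoeff g S := by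
  simp only [walshCoeff, cubeExp, sub_mul, Finset.sum_sub_distrib, sub_div]

lemma walshCoeff_condExpOutside_sub_condExpOutside (h : (E → Bool) → ℝ) (J W S : Finset E) :
    walshCoeff (condExpOutside W fun ω => h ω - condExpOutside J h ω) S
      = if (S ∩ J).Nonempty ∧ S ∩ W = ∅ then walshCoeff h S else 0 := by
  rw [walshCoeff_condExpOutside, walshCoeff_sub, walshCoeff_condExpOutside]
  by_cases hSW : S ∩ W = ∅ <;> by_cases hSJ : S ∩ J = ∅ <;>
    simp [hSW, hSJ, Finset.nonempty_iff_ne_empty]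

end Cube

end

theorem spectral_mass_le_condPivotal_sq_general {E : Type*} [Fintype E] [DecidableEq E]
    (h : (E → Bool) → ℝ) (h01 : ∀ ω, h ω = 0 ∨ h ω = 1)
    (J W : Finset E) :
    ∑ S ∈ Finset.univ.filter
        (fun S : Finset E => (S ∩ J).Nonempty ∧ S ∩ W = ∅),
        walshCoeff h S ^ 2
      ≤ 4 * cubeExp (fun ω =>
          condExpOutside W (fun ω' => if pivotal J h ω' then 1 else 0) ω ^ 2) := by
  set g := condExpOutside W fun ω => h ω - condExpOutside J h ω
  set p := condExpOutside W fun ω' => if pivotal J h ω' then (1 : ℝ) else 0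
  have hosc (ω ω' : E → Bool) : |h ω - h ω'| ≤ 1 := by
    rcases h01 ω with h₁ | h₁ <;> rcases h01 ω' with h₂ | h₂ <;> simp [h₁, h₂]
  have hgp (ω : E → Bool) : |g ω| ≤ p ω :=
    abs_condExpOutside_le fun _ => abs_sub_condExpOutside_le_pivotal hosc J _
  calc ∑ S ∈ Finset.univ.filter (fun S : Finset E => (S ∩ J).Nonempty ∧ S ∩ W = ∅),
        walshCoeff h S ^ 2
      = ∑ S, walshCoeff g S ^ 2 := by
        rw [Finset.sum_filter]
        refine Finset.sum_congr rfl fun S _ => ?_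
        rw [walshCoeff_condExpOutside_sub_condExpOutside]
        split_ifs <;> simp
    _ = cubeExp fun ω => g ω ^ 2 := sum_walshCoeff_sq g
    _ ≤ cubeExp fun ω => p ω ^ 2 :=
        cubeExp_mono fun ω => sq_le_sq.mpr ((hgp ω).trans (le_abs_self _))
    _ ≤ 4 * cubeExp fun ω => p ω ^ 2 :=
        le_mul_of_one_le_left (cubeExp_nonneg fun _ => sq_nonneg _) (by norm_num)

/-- Case `n = 1` of the joint-pivotality lemma: for `h : {-1,1}^E → {0,1}`, `J ⊆ E` and
`W` disjoint from `J`,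
`∑_{S : S ∩ J ≠ ∅, S ∩ W = ∅} ĥ(S)² ≤ 4 E[ P[Piv_J(h) | ω_{|E∖W}]² ]`. -/
theorem spectral_mass_le_condPivotal_sq {E : Type*} [Fintype E] [DecidableEq E]
    (h : (E → Bool) → ℝ) (h01 : ∀ ω, h ω = 0 ∨ h ω = 1)
    (J W : Finset E) (hJW : W ∩ J = ∅) :
    ∑ S ∈ Finset.univ.filter
        (fun S : Finset E => (S ∩ J).Nonempty ∧ S ∩ W = ∅),
        walshCoeff h S ^ 2
      ≤ 4 * cubeExp (fun ω =>
          condExpOutside W (fun ω' => if pivotal J h ω' then 1 else 0) ω ^ 2) :=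
  spectral_mass_le_condPivotal_sq_general h h01 J W
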